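/- For a finite multicomplex M, the homology of the chain complex (ℤM, ∂) splits: H_ℓ(M) ≅ ⊕_{p² ∈ M, 2·deg(p) ≤ ℓ} H_{ℓ−2·deg(p)}(M^{(p²)}), where H on the right is simplicial homology of the simplicial complexes M^{(p²)} (with the empty face placed in degree 0). -/

import Mathlib

open Finsupp

/-- A monomial in variables `x_1 < ⋯ < x_n`, given by its exponent vector. -/
abbrev Mon (n : ℕ) := Fin n → ℕ

/-- Total degree of a monomial. -/
def tdeg {n : ℕ} (m : Mon n) : ℕ := ∑ i, m i

/-- Divisibility of monomials. -/
def mdvd {n : ℕ} (m t : Mon n) : Prop := ∀ i, m i ≤ t i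

/-- A multicomplex: a finite set of monomials closed under taking divisors. -/
def IsMulticomplex {n : ℕ} (M : Finset (Mon n)) : Prop :=
  ∀ m t : Mon n, mdvd m t → t ∈ M → m ∈ M

/-- Square-free monomials. -/
def SqFree {n : ℕ} (m : Mon n) : Prop := ∀ i, m i ≤ 1

def decr {n : ℕ} (m : Mon n) (j : Fin n) : Mon n := Function.update m j (m j - 1)
def incr {n : ℕ} (m : Mon n) (j : Fin n) : Mon n := Function.update m j (m j + 1)
def unitMon {n : ℕ} (i : Fin n) : Mon n := fun j => if j = i then 1 else 0
/-- Sum of the exponents of the variables preceding `j`. -/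
def presum {n : ℕ} (m : Mon n) (j : Fin n) : ℕ := ∑ i ∈ Finset.univ.filter (· < j), m i
/-- Multiplication by the square `p²`. -/
def mulSq {n : ℕ} (p m : Mon n) : Mon n := fun i => 2 * p i + m i

/-- The Björner–Vrećica boundary operator on `ℤ[X]`. -/
noncomputable def bdry (n : ℕ) : (Mon n →₀ ℤ) →ₗ[ℤ] (Mon n →₀ ℤ) :=
  Finsupp.lsum ℤ fun m => LinearMap.toSpanSingleton ℤ _
    (∑ j, (((-1 : ℤ) ^ presum m j) * ((m j % 2 : ℕ) : ℤ)) • Finsupp.single (decr m j) (1 : ℤ))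

/-- The Björner–Vrećica boundary operator, with real coefficients. -/
noncomputable def bdryR (n : ℕ) : (Mon n →₀ ℝ) →ₗ[ℝ] (Mon n →₀ ℝ) :=
  Finsupp.lsum ℝ fun m => LinearMap.toSpanSingleton ℝ _
    (∑ j, (((-1 : ℝ) ^ presum m j) * ((m j % 2 : ℕ) : ℝ)) • Finsupp.single (decr m j) (1 : ℝ))

/-- The dual boundary operator `∂*` of the multicomplex `M`. -/
noncomputable def upL {n : ℕ} (M : Finset (Mon n)) : (Mon n →₀ ℝ) →ₗ[ℝ] (Mon n →₀ ℝ) :=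
  Finsupp.lsum ℝ fun m => LinearMap.toSpanSingleton ℝ _
    (∑ j, (if m j % 2 = 0 ∧ incr m j ∈ M then ((-1 : ℝ) ^ presum m j) else 0) •
      Finsupp.single (incr m j) (1 : ℝ))

/-- Inner product making the monomials an orthonormal basis. -/
noncomputable def dot {n : ℕ} (f g : Mon n →₀ ℝ) : ℝ := ∑ m ∈ f.support, f m * g m

/-- Degree-`d` part of `M`. -/
def Mdeg {n : ℕ} (M : Finset (Mon n)) (d : ℕ) : Finset (Mon n) :=
  M.filter fun m => tdeg m = d

/-- `ℝM_d`, the span of the degree-`d` monomials of `M`. -/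
noncomputable def Vdeg {n : ℕ} (M : Finset (Mon n)) (d : ℕ) : Submodule ℝ (Mon n →₀ ℝ) :=
  Submodule.span ℝ ((fun m => Finsupp.single m (1 : ℝ)) '' ↑(Mdeg M d))

/-- The simplicial complex `M^{(p²)} = {q squarefree : p²q ∈ M}`. -/
def Mp2 {n : ℕ} (M : Finset (Mon n)) (p : Mon n) : Finset (Mon n) :=
  M.filter fun q => (∀ i, q i ≤ 1) ∧ mulSq p q ∈ M

/-- The set of monomials `p` with `p² ∈ M`. -/
def sqrts {n : ℕ} (M : Finset (Mon n)) : Finset (Mon n) :=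
  (M.filter fun m => ∀ i, m i % 2 = 0).image fun m i => m i / 2

/-- Laplacian `L' = ∂∂*` of the multicomplex `M`. -/
noncomputable def lapUp {n : ℕ} (M : Finset (Mon n)) : (Mon n →₀ ℝ) →ₗ[ℝ] (Mon n →₀ ℝ) :=
  bdryR n ∘ₗ upL M

/-- Laplacian `L'' = ∂*∂` of the multicomplex `M`. -/
noncomputable def lapDown {n : ℕ} (M : Finset (Mon n)) : (Mon n →₀ ℝ) →ₗ[ℝ] (Mon n →₀ ℝ) :=
  upL M ∘ₗ bdryR n

/-- Multiplicity of `μ` as an eigenvalue of an operator `T` on `ℝM_d`. -/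
noncomputable def multOf {n : ℕ} (M : Finset (Mon n)) (d : ℕ)
    (T : (Mon n →₀ ℝ) →ₗ[ℝ] (Mon n →₀ ℝ)) (μ : ℝ) : ℕ :=
  Module.finrank ℝ ↥(LinearMap.ker (T - μ • LinearMap.id) ⊓ Vdeg M d)

/-- Multiplicity of `μ` in the spectrum `s'_d` of `L'_d`. -/
noncomputable def multL' {n : ℕ} (M : Finset (Mon n)) (d : ℕ) (μ : ℝ) : ℕ :=
  multOf M d (lapUp M) μ

/-- Multiplicity of `μ` in the spectrum `s''_d` of `L''_d`. -/
noncomputable def multL'' {n : ℕ} (M : Finset (Mon n)) (d : ℕ) (μ : ℝ) : ℕ :=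
  multOf M d (lapDown M) μ

/-- Multiplicity of `μ` in the spectrum `s^{tot}_d` of `L_d = L'_d + L''_d`. -/
noncomputable def multL {n : ℕ} (M : Finset (Mon n)) (d : ℕ) (μ : ℝ) : ℕ :=
  multOf M d (lapUp M + lapDown M) μ

/-- Shifted multicomplex (relative to its support). -/
def Shifted {n : ℕ} (N : Finset (Mon n)) : Prop :=
  ∀ (m : Mon n) (i j : Fin n), i < j → incr m j ∈ N → unitMon i ∈ N → incr m i ∈ N

/-- Shifted simplicial complex (relative to its support). -/
def ShiftedSimp {n : ℕ} (N : Finset (Mon n)) : Prop :=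
  ∀ (m : Mon n) (i j : Fin n), i < j → incr m j ∈ N → unitMon i ∈ N → m i = 0 →
    incr m i ∈ N

/-- `d_j`: the number of monomials of degree `k` in `N` divisible by `x_j`. -/
def dseq {n : ℕ} (N : Finset (Mon n)) (k : ℕ) (j : Fin n) : ℕ :=
  ((Mdeg N k).filter fun m => 1 ≤ m j).card

/-- The `j`-th entry of the conjugate partition `d_k^T(N)`. -/
def dconj {n : ℕ} (N : Finset (Mon n)) (k : ℕ) (j : ℕ) : ℕ :=
  (Finset.univ.filter fun i : Fin n => j ≤ dseq N k i).card

open DirectSum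

/-- Cycles: `ker ∂ ∩ ℤM_ℓ`. -/
noncomputable def cycles {n : ℕ} (M : Finset (Mon n)) (ℓ : ℕ) : Submodule ℤ (Mon n →₀ ℤ) :=
  LinearMap.ker (bdry n) ⊓
    Submodule.span ℤ ((fun m => Finsupp.single m (1 : ℤ)) '' ↑(Mdeg M ℓ))

/-- Boundaries: `∂(ℤM_{ℓ+1})`. -/
noncomputable def bnds {n : ℕ} (M : Finset (Mon n)) (ℓ : ℕ) : Submodule ℤ (Mon n →₀ ℤ) :=
  Submodule.map (bdry n)
    (Submodule.span ℤ ((fun m => Finsupp.single m (1 : ℤ)) '' ↑(Mdeg M (ℓ + 1))))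

/-- The degree-`ℓ` homology of `(ℤM, ∂)`. -/
abbrev Hgy {n : ℕ} (M : Finset (Mon n)) (ℓ : ℕ) :=
  ↥(cycles M ℓ) ⧸ Submodule.comap (cycles M ℓ).subtype (bnds M ℓ)

/-!
Every monomial factors uniquely as `m = p² q` with `q` squarefree, and `∂(p² q) = p² ∂q`: the
boundary only lowers odd exponents, and its signs depend only on the parities of the exponents.
So `ℤM` is the direct sum of the subcomplexes `p² ℤM^{(p²)}`, the `p`-th one isomorphic to the
chain complex of `M^{(p²)}` shifted up by `2 deg p`, and homology commutes with finite direct sums.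
-/

section Subquotient

variable {R ι V : Type*} [CommRing R] [Fintype ι] [DecidableEq ι] [AddCommGroup V] [Module R V]
  {W : ι → Type*} [∀ i, AddCommGroup (W i)] [∀ i, Module R (W i)]
  {Z B : Submodule R V} {Zi Bi : ∀ i, Submodule R (W i)}
  {ρ : ∀ i, V →ₗ[R] W i} {φ : ∀ i, W i →ₗ[R] V}

def Submodule.equivPiOfDecomposition (hρ : ∀ i, Z ≤ (Zi i).comap (ρ i))
    (hφ : ∀ i, Zi i ≤ Z.comap (φ i)) (hsum : ∀ z ∈ Z, ∑ i, φ i (ρ i z) = z)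
    (hself : ∀ i, ∀ w ∈ Zi i, ρ i (φ i w) = w)
    (hne : ∀ i j, i ≠ j → ∀ w ∈ Zi j, ρ i (φ j w) = 0) :
    Z ≃ₗ[R] Π i, Zi i where
  toFun z i := ⟨ρ i z, hρ i z.2⟩
  map_add' _ _ := by ext; simp
  map_smul' _ _ := by ext; simp
  invFun w := ⟨∑ i, φ i (w i), Z.sum_mem fun i _ => hφ i (w i).2⟩
  left_inv z := Subtype.ext (hsum z z.2)
  right_inv w := funext fun i => Subtype.ext <| by
    change ρ i (∑ j, φ j (w j)) = w i
    rw [map_sum, Finset.sum_eq_single i (fun j _ hj => hne i j hj.symm _ (w j).2)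
      (by simp), hself i _ (w i).2]

def Submodule.subquotientEquivDirectSum (hρ : ∀ i, Z ≤ (Zi i).comap (ρ i))
    (hφ : ∀ i, Zi i ≤ Z.comap (φ i)) (hsum : ∀ z ∈ Z, ∑ i, φ i (ρ i z) = z)
    (hself : ∀ i, ∀ w ∈ Zi i, ρ i (φ i w) = w)
    (hne : ∀ i j, i ≠ j → ∀ w ∈ Zi j, ρ i (φ j w) = 0)
    (hρB : ∀ i, B ≤ (Bi i).comap (ρ i)) (hφB : ∀ i, Bi i ≤ B.comap (φ i)) :
    (Z ⧸ B.comap Z.subtype) ≃ₗ[R] ⨁ i, Zi i ⧸ (Bi i).comap (Zi i).subtype := by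
  let e := Submodule.equivPiOfDecomposition hρ hφ hsum hself hne
  have he : (B.comap Z.subtype).map (e : Z →ₗ[R] Π i, Zi i) =
      Submodule.pi Set.univ fun i => (Bi i).comap (Zi i).subtype := by
    refine le_antisymm ?_ fun w hw => ⟨e.symm w, ?_, e.apply_symm_apply w⟩
    · rintro _ ⟨z, hz, rfl⟩ i -
      exact hρB i hz
    · exact B.sum_mem fun i _ => hφB i (hw i trivial)
  exact (Submodule.Quotient.equiv _ _ e he).trans <|
    (Submodule.quotientPi _).trans (linearEquivFunOnFintype R ι _).symm

end Subquotient

section Multicomplex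

variable {n : ℕ}

def sqrtPart (m : Mon n) : Mon n := fun i => m i / 2

def sqfreePart (m : Mon n) : Mon n := fun i => m i % 2

lemma mulSq_sqrtPart_sqfreePart (m : Mon n) : mulSq (sqrtPart m) (sqfreePart m) = m := by
  funext i; simp only [mulSq, sqrtPart, sqfreePart]; omega

lemma sqrtPart_mulSq (p : Mon n) {q : Mon n} (hq : SqFree q) : sqrtPart (mulSq p q) = p := by
  funext i; have := hq i; simp only [mulSq, sqrtPart]; omega

lemma sqfreePart_mulSq (p : Mon n) {q : Mon n} (hq : SqFree q) : sqfreePart (mulSq p q) = q := by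
  funext i; have := hq i; simp only [mulSq, sqfreePart]; omega

lemma mulSq_zero_injective : Function.Injective fun p : Mon n => mulSq p 0 := by
  intro p q h
  funext i
  have := congrFun h i
  simp only [mulSq, Pi.zero_apply] at this
  omega

lemma tdeg_mulSq (p q : Mon n) : tdeg (mulSq p q) = 2 * tdeg p + tdeg q := by
  simp [tdeg, mulSq, Finset.sum_add_distrib, Finset.mul_sum]

lemma tdeg_eq_sqrtPart_add_sqfreePart (m : Mon n) :
    tdeg m = 2 * tdeg (sqrtPart m) + tdeg (sqfreePart m) := by
  rw [← tdeg_mulSq, mulSq_sqrtPart_sqfreePart]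

lemma presum_mulSq (p m : Mon n) (j : Fin n) :
    presum (mulSq p m) j = 2 * presum p j + presum m j := by
  simp [presum, mulSq, Finset.sum_add_distrib, Finset.mul_sum]

lemma neg_one_pow_presum_sqfreePart (m : Mon n) (j : Fin n) :
    (-1 : ℤ) ^ presum (sqfreePart m) j = (-1) ^ presum m j := by
  rw [neg_one_pow_eq_pow_mod_two, neg_one_pow_eq_pow_mod_two (n := presum m j), presum, presum,
    Finset.sum_nat_mod, Finset.sum_nat_mod _ 2 m]
  simp only [sqfreePart, Nat.mod_mod]

lemma decr_mulSq (p m : Mon n) {j : Fin n} (h : 1 ≤ m j) :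
    decr (mulSq p m) j = mulSq p (decr m j) := by
  funext i
  by_cases hij : i = j
  · subst hij; simp only [decr, mulSq, Function.update_self]; omega
  · simp [decr, mulSq, hij]

lemma sqrtPart_decr {m : Mon n} {j : Fin n} (h : m j % 2 = 1) :
    sqrtPart (decr m j) = sqrtPart m := by
  funext i
  by_cases hij : i = j
  · subst hij; simp only [sqrtPart, decr, Function.update_self]; omega
  · simp [sqrtPart, decr, hij]

lemma sqfreePart_decr {m : Mon n} {j : Fin n} (h : m j % 2 = 1) :
    sqfreePart (decr m j) = decr (sqfreePart m) j := by
  funext i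
  by_cases hij : i = j
  · subst hij; simp only [sqfreePart, decr, Function.update_self]; omega
  · simp [sqfreePart, decr, hij]

lemma bdry_single (m : Mon n) :
    bdry n (Finsupp.single m 1) =
      ∑ j, ((-1 : ℤ) ^ presum m j * ((m j % 2 : ℕ) : ℤ)) • Finsupp.single (decr m j) 1 := by
  simp [bdry]

noncomputable def mulSqMap (p : Mon n) : (Mon n →₀ ℤ) →ₗ[ℤ] (Mon n →₀ ℤ) :=
  Finsupp.lmapDomain ℤ ℤ (mulSq p)

/-- Projection onto the summand `p² ℤM^{(p²)}`, followed by division by `p²`. -/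
noncomputable def sqComponent (p : Mon n) : (Mon n →₀ ℤ) →ₗ[ℤ] (Mon n →₀ ℤ) :=
  Finsupp.lsum ℤ fun m => if sqrtPart m = p then Finsupp.lsingle (sqfreePart m) else 0

lemma mulSqMap_single (p q : Mon n) (c : ℤ) :
    mulSqMap p (Finsupp.single q c) = Finsupp.single (mulSq p q) c :=
  Finsupp.mapDomain_single

lemma sqComponent_single (p m : Mon n) (c : ℤ) :
    sqComponent p (Finsupp.single m c) =
      if sqrtPart m = p then Finsupp.single (sqfreePart m) c else 0 := by
  simp only [sqComponent, Finsupp.lsum_single]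
  split_ifs <;> rfl

lemma bdry_comp_mulSqMap (p : Mon n) : bdry n ∘ₗ mulSqMap p = mulSqMap p ∘ₗ bdry n := by
  refine Finsupp.lhom_ext' fun m => LinearMap.ext_ring ?_
  simp only [LinearMap.comp_apply, Finsupp.lsingle_apply, mulSqMap_single, bdry_single, map_sum,
    map_smul]
  refine Finset.sum_congr rfl fun j _ => ?_
  rcases Nat.mod_two_eq_zero_or_one (m j) with h | h
  · have h2 : mulSq p m j % 2 = 0 := by simp only [mulSq]; omega
    simp [h, h2]
  · have h2 : mulSq p m j % 2 = 1 := by simp only [mulSq]; omega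
    rw [h, h2, decr_mulSq p m (by omega), presum_mulSq, pow_add, pow_mul, neg_one_sq, one_pow,
      one_mul]

lemma bdry_comp_sqComponent (p : Mon n) : bdry n ∘ₗ sqComponent p = sqComponent p ∘ₗ bdry n := by
  refine Finsupp.lhom_ext' fun m => LinearMap.ext_ring ?_
  simp only [LinearMap.comp_apply, Finsupp.lsingle_apply, bdry_single, map_sum, map_smul,
    sqComponent_single]
  by_cases hroot : sqrtPart m = p
  · rw [if_pos hroot, bdry_single]
    refine Finset.sum_congr rfl fun j _ => ?_
    rcases Nat.mod_two_eq_zero_or_one (m j) with h | h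
    · have h2 : sqfreePart m j % 2 = 0 := by simp only [sqfreePart]; omega
      simp [h, h2]
    · have h2 : sqfreePart m j % 2 = 1 := by simp only [sqfreePart]; omega
      rw [h, h2, sqrtPart_decr h, if_pos hroot, sqfreePart_decr h,
        neg_one_pow_presum_sqfreePart]
  · rw [if_neg hroot, map_zero]
    refine (Finset.sum_eq_zero fun j _ => ?_).symm
    rcases Nat.mod_two_eq_zero_or_one (m j) with h | h
    · simp [h]
    · rw [sqrtPart_decr h, if_neg hroot, smul_zero]

/-- `ℤN_d`; by definition `cycles N d = ker ∂ ⊓ chains N d` and `bnds N d = ∂ (chains N (d + 1))`. -/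
noncomputable def chains (N : Finset (Mon n)) (d : ℕ) : Submodule ℤ (Mon n →₀ ℤ) :=
  Submodule.span ℤ ((fun m => Finsupp.single m (1 : ℤ)) '' ↑(Mdeg N d))

lemma chains_le_iff {N : Finset (Mon n)} {d : ℕ} {P : Submodule ℤ (Mon n →₀ ℤ)} :
    chains N d ≤ P ↔ ∀ m ∈ Mdeg N d, Finsupp.single m 1 ∈ P := by
  rw [chains, Submodule.span_le, Set.image_subset_iff]
  rfl

lemma cycles_le_comap {N N' : Finset (Mon n)} {d d' : ℕ} {T : (Mon n →₀ ℤ) →ₗ[ℤ] (Mon n →₀ ℤ)}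
    (hT : bdry n ∘ₗ T = T ∘ₗ bdry n) (h : chains N d ≤ (chains N' d').comap T) :
    cycles N d ≤ (cycles N' d').comap T := by
  rintro z ⟨hz, hzc⟩
  refine ⟨?_, h hzc⟩
  rw [SetLike.mem_coe, LinearMap.mem_ker] at hz ⊢
  rw [← LinearMap.comp_apply, hT, LinearMap.comp_apply, hz, map_zero]

lemma bnds_le_comap {N N' : Finset (Mon n)} {d d' : ℕ} {T : (Mon n →₀ ℤ) →ₗ[ℤ] (Mon n →₀ ℤ)}
    (hT : bdry n ∘ₗ T = T ∘ₗ bdry n) (h : chains N (d + 1) ≤ (chains N' (d' + 1)).comap T) :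
    bnds N d ≤ (bnds N' d').comap T := by
  rintro _ ⟨y, hy, rfl⟩
  exact ⟨T y, h hy, LinearMap.congr_fun hT y⟩

lemma sqfreePart_mem_Mdeg_Mp2 {M : Finset (Mon n)} (hM : IsMulticomplex M) {m : Mon n} {d : ℕ}
    (hm : m ∈ Mdeg M d) :
    sqfreePart m ∈ Mdeg (Mp2 M (sqrtPart m)) (d - 2 * tdeg (sqrtPart m)) := by
  obtain ⟨hmM, rfl⟩ := Finset.mem_filter.mp hm
  refine Finset.mem_filter.mpr ⟨Finset.mem_filter.mpr ⟨?_, ?_, ?_⟩, ?_⟩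
  · exact hM _ m (fun i => Nat.mod_le _ _) hmM
  · exact fun i => Nat.le_of_lt_succ (Nat.mod_lt _ two_pos)
  · rwa [mulSq_sqrtPart_sqfreePart]
  · have := tdeg_eq_sqrtPart_add_sqfreePart m
    omega

lemma mulSq_mem_Mdeg {M : Finset (Mon n)} {p q : Mon n} {d : ℕ} (hq : q ∈ Mdeg (Mp2 M p) d) :
    mulSq p q ∈ Mdeg M (2 * tdeg p + d) := by
  obtain ⟨hqM, rfl⟩ := Finset.mem_filter.mp hq
  exact Finset.mem_filter.mpr ⟨(Finset.mem_filter.mp hqM).2.2, tdeg_mulSq p q⟩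

lemma chains_le_comap_sqComponent {M : Finset (Mon n)} (hM : IsMulticomplex M) (p : Mon n)
    {d d' : ℕ} (hd : d' + 2 * tdeg p = d) :
    chains M d ≤ (chains (Mp2 M p) d').comap (sqComponent p) := by
  refine chains_le_iff.mpr fun m hm => ?_
  rw [Submodule.mem_comap, sqComponent_single]
  split_ifs with hp
  · subst hp
    have hd' : d' = d - 2 * tdeg (sqrtPart m) := by omega
    exact Submodule.subset_span ⟨_, hd' ▸ sqfreePart_mem_Mdeg_Mp2 hM hm, rfl⟩
  · exact zero_mem _

lemma chains_Mp2_le_comap_mulSqMap (M : Finset (Mon n)) (p : Mon n) {d d' : ℕ}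
    (hd : 2 * tdeg p + d' = d) :
    chains (Mp2 M p) d' ≤ (chains M d).comap (mulSqMap p) := by
  refine chains_le_iff.mpr fun q hq => ?_
  rw [Submodule.mem_comap, mulSqMap_single]
  exact Submodule.subset_span ⟨_, hd ▸ mulSq_mem_Mdeg hq, rfl⟩

instance (M : Finset (Mon n)) (ℓ : ℕ) :
    Finite {p : Mon n // mulSq p 0 ∈ M ∧ 2 * tdeg p ≤ ℓ} :=
  Finite.of_injective (fun p => (⟨mulSq p.1 0, p.2.1⟩ : M))
    fun _ _ h => Subtype.ext (mulSq_zero_injective (congrArg Subtype.val h))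

lemma sum_mulSqMap_sqComponent {M : Finset (Mon n)} (hM : IsMulticomplex M) {ℓ : ℕ}
    [Fintype {p : Mon n // mulSq p 0 ∈ M ∧ 2 * tdeg p ≤ ℓ}] {f : Mon n →₀ ℤ}
    (hf : f ∈ chains M ℓ) :
    ∑ p : {p : Mon n // mulSq p 0 ∈ M ∧ 2 * tdeg p ≤ ℓ}, mulSqMap p.1 (sqComponent p.1 f) = f := by
  have key := LinearMap.eqOn_span (f := ∑ p : {p : Mon n // mulSq p 0 ∈ M ∧ 2 * tdeg p ≤ ℓ},
    mulSqMap p.1 ∘ₗ sqComponent p.1) (g := LinearMap.id) ?_ hf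
  · simpa using key
  rintro _ ⟨m, hm, rfl⟩
  obtain ⟨hmM, rfl⟩ := Finset.mem_filter.mp hm
  have hroot : mulSq (sqrtPart m) 0 ∈ M ∧ 2 * tdeg (sqrtPart m) ≤ tdeg m :=
    ⟨hM _ m (fun i => by simp only [mulSq, sqrtPart, Pi.zero_apply]; omega) hmM,
      by have := tdeg_eq_sqrtPart_add_sqfreePart m; omega⟩
  simp only [LinearMap.sum_apply, LinearMap.comp_apply, LinearMap.id_apply, sqComponent_single]
  rw [Fintype.sum_eq_single ⟨sqrtPart m, hroot⟩ fun p hp => by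
    rw [if_neg fun h => hp (Subtype.ext h.symm), map_zero]]
  rw [if_pos rfl, mulSqMap_single, mulSq_sqrtPart_sqfreePart]

lemma sqComponent_mulSqMap_self {M : Finset (Mon n)} {p : Mon n} {d : ℕ} {f : Mon n →₀ ℤ}
    (hf : f ∈ chains (Mp2 M p) d) : sqComponent p (mulSqMap p f) = f := by
  refine LinearMap.eqOn_span (f := sqComponent p ∘ₗ mulSqMap p) (g := LinearMap.id) ?_ hf
  rintro _ ⟨q, hq, rfl⟩
  have hsq : SqFree q := (Finset.mem_filter.mp (Finset.mem_filter.mp hq).1).2.1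
  simp [mulSqMap_single, sqComponent_single, sqrtPart_mulSq p hsq, sqfreePart_mulSq p hsq]

lemma sqComponent_mulSqMap_of_ne {M : Finset (Mon n)} {p q : Mon n} (hpq : p ≠ q) {d : ℕ}
    {f : Mon n →₀ ℤ} (hf : f ∈ chains (Mp2 M q) d) : sqComponent p (mulSqMap q f) = 0 := by
  refine LinearMap.eqOn_span (f := sqComponent p ∘ₗ mulSqMap q) (g := 0) ?_ hf
  rintro _ ⟨m, hm, rfl⟩
  have hsq : SqFree m := (Finset.mem_filter.mp (Finset.mem_filter.mp hm).1).2.1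
  simp [mulSqMap_single, sqComponent_single, sqrtPart_mulSq q hsq, hpq.symm]

end Multicomplex

/-- `H_ℓ(M) ≅ ⊕_{p² ∈ M, 2 deg p ≤ ℓ} H_{ℓ − 2 deg p}(M^{(p²)})`. -/
theorem homology_splits {n : ℕ} (M : Finset (Mon n)) (hM : IsMulticomplex M) (ℓ : ℕ) :
    Nonempty (Hgy M ℓ ≃ₗ[ℤ]
      ⨁ p : {p : Mon n // mulSq p 0 ∈ M ∧ 2 * tdeg p ≤ ℓ},
        Hgy (Mp2 M p.1) (ℓ - 2 * tdeg p.1)) := by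
  classical
  have := Fintype.ofFinite {p : Mon n // mulSq p 0 ∈ M ∧ 2 * tdeg p ≤ ℓ}
  exact ⟨Submodule.subquotientEquivDirectSum (ρ := fun p => sqComponent p.1)
    (φ := fun p => mulSqMap p.1)
    (fun p => cycles_le_comap (bdry_comp_sqComponent p.1)
      (chains_le_comap_sqComponent hM p.1 (by have := p.2.2; omega)))
    (fun p => cycles_le_comap (bdry_comp_mulSqMap p.1)
      (chains_Mp2_le_comap_mulSqMap M p.1 (by have := p.2.2; omega)))
    (fun _ hz => sum_mulSqMap_sqComponent hM hz.2)
    (fun _ _ hw => sqComponent_mulSqMap_self hw.2)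
    (fun _ _ hpq _ hw => sqComponent_mulSqMap_of_ne (Subtype.coe_ne_coe.mpr hpq) hw.2)
    (fun p => bnds_le_comap (bdry_comp_sqComponent p.1)
      (chains_le_comap_sqComponent hM p.1 (by have := p.2.2; omega)))
    (fun p => bnds_le_comap (bdry_comp_mulSqMap p.1)
      (chains_Mp2_le_comap_mulSqMap M p.1 (by have := p.2.2; omega)))⟩
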